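/- arXiv:math/0603021 — 2 statements merged into one kernel-verified Lean document; each statement's English description precedes it below -/
import Mathlib

section
/- Let $F : (0,\infty) \to \mathbb{R}$ be concave, non-decreasing, and satisfy $F(xy) \le F(x) + F(y)$ for all $x, y > 0$. Let $(\Omega, \mu)$ be a probability space, $f$ with $\int f^2 d\mu = 1$ and $f^2 > 0$ a.e., and $W$ a function with $F^{-1}(W)$ well-defined, positive, and integrable. Then $F\left( \int F^{-1}(W) \, d\mu \right) \ge \int (W - F(f^2)) f^2 \, d\mu$. -/
open MeasureTheory

/-- A concave function on `Ioi 0` has a supporting line at every point. -/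
lemma support_line_aux (F : ℝ → ℝ) (hconc : ConcaveOn ℝ (Set.Ioi 0) F) {m : ℝ} (hm : 0 < m) :
    ∃ c : ℝ, ∀ x ∈ Set.Ioi (0 : ℝ), F x ≤ F m + c * (x - m) := by
  set S : Set ℝ := (fun x => (F x - F m) / (x - m)) '' Set.Ioi m with hS
  have hmem : ∀ x, m < x → (F x - F m) / (x - m) ∈ S := fun x hx => ⟨x, hx, rfl⟩
  have hub : ∀ l, 0 < l → l < m → ∀ s ∈ S, s ≤ (F m - F l) / (m - l) := by
    rintro l hl hlm s ⟨x, hx, rfl⟩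
    exact hconc.slope_anti_adjacent (Set.mem_Ioi.2 hl) (Set.mem_Ioi.2 (hm.trans hx)) hlm hx
  have hne : S.Nonempty := ⟨_, hmem (m + 1) (by linarith)⟩
  have hbdd : BddAbove S := ⟨(F m - F (m / 2)) / (m - m / 2),
    hub (m / 2) (by linarith) (by linarith)⟩
  refine ⟨sSup S, fun x hx => ?_⟩
  simp only [Set.mem_Ioi] at hx
  rcases lt_trichotomy x m with h | h | h
  · have h1 : sSup S ≤ (F m - F x) / (m - x) := csSup_le hne (hub x hx h)
    have h2 : sSup S * (m - x) ≤ F m - F x :=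
      (le_div_iff₀ (by linarith)).mp h1
    nlinarith
  · simp [h]
  · have h1 : (F x - F m) / (x - m) ≤ sSup S := le_csSup hbdd (hmem x h)
    have h2 : F x - F m ≤ sSup S * (x - m) := by
      rw [div_le_iff₀ (by linarith)] at h1; linarith
    linarith

/-- Jensen-type inequality from the proof of Theorem 2.3:
`F(∫ F⁻¹(W) dμ) ≥ ∫ (W - F(f²)) f² dμ`. -/
theorem stmt_6 {Ω : Type*} [MeasurableSpace Ω] (μ : Measure Ω) [IsProbabilityMeasure μ]
    (F Finv : ℝ → ℝ)
    (hconc : ConcaveOn ℝ (Set.Ioi 0) F) (hmono : MonotoneOn F (Set.Ioi 0))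
    (hsub : ∀ x y : ℝ, 0 < x → 0 < y → F (x * y) ≤ F x + F y)
    (f W : Ω → ℝ) (hf : Measurable f) (hW : Measurable W)
    (hf2 : ∫ ω, (f ω) ^ 2 ∂μ = 1) (hfpos : ∀ᵐ ω ∂μ, 0 < (f ω) ^ 2)
    (hFinv : ∀ ω, 0 < Finv (W ω) ∧ F (Finv (W ω)) = W ω)
    (hint1 : Integrable (fun ω => Finv (W ω)) μ)
    (hint2 : Integrable (fun ω => (W ω - F ((f ω) ^ 2)) * (f ω) ^ 2) μ) :
    F (∫ ω, Finv (W ω) ∂μ) ≥ ∫ ω, (W ω - F ((f ω) ^ 2)) * (f ω) ^ 2 ∂μ := by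
  -- f² is integrable, since its integral is 1 ≠ 0
  have hf2int : Integrable (fun ω => (f ω) ^ 2) μ := by
    by_contra h
    rw [integral_undef h] at hf2
    norm_num at hf2
  set m := ∫ ω, Finv (W ω) ∂μ with hm_def
  -- the integral m is positive
  have hm : 0 < m := by
    rw [hm_def]
    rw [integral_pos_iff_support_of_nonneg_ae
      (Filter.Eventually.of_forall fun ω => (hFinv ω).1.le) hint1]
    have : Function.support (fun ω => Finv (W ω)) = Set.univ := by
      ext ω; simp [(hFinv ω).1.ne']
    rw [this]
    simp
  obtain ⟨c, hc⟩ := support_line_aux F hconc hm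
  -- pointwise bound
  have hptwise : ∀ᵐ ω ∂μ, (W ω - F ((f ω) ^ 2)) * (f ω) ^ 2 ≤
      F m * (f ω) ^ 2 + c * (Finv (W ω) - m * (f ω) ^ 2) := by
    filter_upwards [hfpos] with ω hω
    have hq : 0 < Finv (W ω) / (f ω) ^ 2 := div_pos (hFinv ω).1 hω
    have h1 : F (Finv (W ω)) ≤ F (Finv (W ω) / (f ω) ^ 2) + F ((f ω) ^ 2) := by
      have := hsub (Finv (W ω) / (f ω) ^ 2) ((f ω) ^ 2) hq hω
      rwa [div_mul_cancel₀ _ hω.ne'] at this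
    have h2 : F (Finv (W ω) / (f ω) ^ 2) ≤ F m + c * (Finv (W ω) / (f ω) ^ 2 - m) :=
      hc _ hq
    have hWe := (hFinv ω).2
    have h3 : W ω - F ((f ω) ^ 2) ≤ F m + c * (Finv (W ω) / (f ω) ^ 2 - m) := by
      linarith
    have h4 : (W ω - F ((f ω) ^ 2)) * (f ω) ^ 2 ≤
        (F m + c * (Finv (W ω) / (f ω) ^ 2 - m)) * (f ω) ^ 2 :=
      mul_le_mul_of_nonneg_right h3 hω.le
    obtain ⟨u, hu⟩ : ∃ u, Finv (W ω) = u * (f ω) ^ 2 :=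
      ⟨Finv (W ω) / (f ω) ^ 2, (div_mul_cancel₀ _ hω.ne').symm⟩
    have h5 : (F m + c * (Finv (W ω) / (f ω) ^ 2 - m)) * (f ω) ^ 2 =
        F m * (f ω) ^ 2 + c * (Finv (W ω) - m * (f ω) ^ 2) := by
      rw [hu, mul_div_assoc, div_self hω.ne', mul_one]; ring
    linarith
  -- integrability of the upper bound
  have hsubint : Integrable (fun ω => Finv (W ω) - m * (f ω) ^ 2) μ := by
    exact hint1.sub (hf2int.const_mul m)
  have hrint' : Integrable (fun ω => c * (Finv (W ω) - m * (f ω) ^ 2)) μ := by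
    exact hsubint.const_mul c
  have hrint : Integrable (fun ω => F m * (f ω) ^ 2 + c * (Finv (W ω) - m * (f ω) ^ 2)) μ := by
    exact (hf2int.const_mul (F m)).add hrint'
  have hle := integral_mono_ae hint2 hrint hptwise
  have hre : ∫ ω, (F m * (f ω) ^ 2 + c * (Finv (W ω) - m * (f ω) ^ 2)) ∂μ = F m := by
    rw [integral_add (hf2int.const_mul (F m)) hrint',
      integral_const_mul, integral_const_mul,
      integral_sub hint1 (by exact hf2int.const_mul m), integral_const_mul, hf2, ← hm_def]
    ring
  rw [hre] at hle
  exact hle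
end

section
/- Let $\eta : [0,\infty) \to [0,\infty)$ and suppose a Markov semigroup $(P_t)$ with symmetric invariant probability $\mu$ satisfies $\mathrm{Var}_\mu(P_t f) \le \eta(t) \| f - \int f d\mu \|_\infty^2$ for all bounded $f$. Then for bounded measurable $f, g$ each centered and bounded by 1, $\left| \int P_r f \cdot g \, d\mu \right| \le \eta(r/2)$, i.e. the stationary process is strongly mixing with $\alpha(r) \le \eta(r/2)$. -/
open MeasureTheory

/-- Proposition 3.3 (symmetric case): variance decay of a symmetric Markov
semigroup implies strong mixing with `α(r) ≤ η(r/2)`. -/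
theorem stmt_17 {Ω : Type*} [MeasurableSpace Ω] (μ : Measure Ω) [IsProbabilityMeasure μ]
    (P : ℝ → (Ω → ℝ) → (Ω → ℝ)) (η : ℝ → ℝ)
    (hPint : ∀ t : ℝ, ∀ f : Ω → ℝ, Integrable (P t f) μ ∧
      Integrable (fun ω => (P t f ω) ^ 2) μ)
    (hinv : ∀ t : ℝ, 0 ≤ t → ∀ f : Ω → ℝ, ∫ ω, P t f ω ∂μ = ∫ ω, f ω ∂μ)
    (hsym : ∀ t : ℝ, 0 ≤ t → ∀ f g : Ω → ℝ,
      ∫ ω, P t f ω * g ω ∂μ = ∫ ω, f ω * P t g ω ∂μ)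
    (hsemi : ∀ s t : ℝ, 0 ≤ s → 0 ≤ t → ∀ f : Ω → ℝ, P (s + t) f = P s (P t f))
    (hdec : ∀ t : ℝ, 0 ≤ t → ∀ f : Ω → ℝ, ∀ M : ℝ,
      (∀ ω, |f ω - ∫ ω', f ω' ∂μ| ≤ M) →
      ∫ ω, (P t f ω) ^ 2 ∂μ - (∫ ω, P t f ω ∂μ) ^ 2 ≤ η t * M ^ 2) :
    ∀ r : ℝ, 0 ≤ r → ∀ f g : Ω → ℝ,
      (∀ ω, |f ω| ≤ 1) → (∀ ω, |g ω| ≤ 1) →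
      (∫ ω, f ω ∂μ = 0) → (∫ ω, g ω ∂μ = 0) →
      |∫ ω, P r f ω * g ω ∂μ| ≤ η (r / 2) := by
  intro r hr f g hf hg hfm hgm
  have hr2 : (0:ℝ) ≤ r / 2 := by linarith
  set u := P (r / 2) f with hu
  set v := P (r / 2) g with hv
  -- rewrite P r f via semigroup property
  have hPr : P r f = P (r / 2) u := by
    rw [hu, ← hsemi _ _ hr2 hr2]
    norm_num
  -- symmetrize
  have key : ∫ ω, P r f ω * g ω ∂μ = ∫ ω, u ω * v ω ∂μ := by
    rw [hPr, hsym _ hr2]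
  -- means vanish
  have hum : ∫ ω, u ω ∂μ = 0 := by rw [hu, hinv _ hr2, hfm]
  have hvm : ∫ ω, v ω ∂μ = 0 := by rw [hv, hinv _ hr2, hgm]
  -- variance bounds
  have hu2 : ∫ ω, u ω ^ 2 ∂μ ≤ η (r / 2) := by
    have := hdec (r / 2) hr2 f 1 (by intro ω; rw [hfm, sub_zero]; exact hf ω)
    rw [hum] at this
    simpa using this
  have hv2 : ∫ ω, v ω ^ 2 ∂μ ≤ η (r / 2) := by
    have := hdec (r / 2) hr2 g 1 (by intro ω; rw [hgm, sub_zero]; exact hg ω)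
    rw [hvm] at this
    simpa using this
  -- integrability
  have hiu2 : Integrable (fun ω => u ω ^ 2) μ := (hPint (r / 2) f).2
  have hiv2 : Integrable (fun ω => v ω ^ 2) μ := (hPint (r / 2) g).2
  have hisum : Integrable (fun ω => (u ω ^ 2 + v ω ^ 2) / 2) μ := by
    exact ((hiu2.add hiv2).div_const 2)
  rw [key]
  calc |∫ ω, u ω * v ω ∂μ| ≤ ∫ ω, |u ω * v ω| ∂μ := by simpa [Real.norm_eq_abs, abs_mul] using norm_integral_le_integral_norm (μ := μ) (fun ω => u ω * v ω)
    _ ≤ ∫ ω, (u ω ^ 2 + v ω ^ 2) / 2 ∂μ := by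
        apply integral_mono_of_nonneg
        · filter_upwards with ω using abs_nonneg _
        · exact hisum
        · filter_upwards with ω
          have := abs_mul_abs_self (u ω - v ω)
          have h2 := sq_nonneg (u ω - v ω)
          have h3 := sq_nonneg (u ω + v ω)
          rw [abs_mul]
          cases abs_cases (u ω) with
          | inl h => cases abs_cases (v ω) with
            | inl h' => nlinarith
            | inr h' => nlinarith
          | inr h => cases abs_cases (v ω) with
            | inl h' => nlinarith
            | inr h' => nlinarith
    _ = ((∫ ω, u ω ^ 2 ∂μ) + ∫ ω, v ω ^ 2 ∂μ) / 2 := by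
        rw [integral_div, integral_add hiu2 hiv2]
    _ ≤ η (r / 2) := by linarith
end
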